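/- arXiv:2410.06069 — 5 statements merged into one kernel-verified Lean document; each statement's English description precedes it below -/
import Mathlib

section
/- Suppose an allocation (s_1, …, s_n) of natural numbers maximizes ∑_{i=1}^n (1 - β^{s_i}) subject to ∑ s_i ≤ S, where 0 < β < 1. Then for all i, j, |s_i - s_j| ≤ 1. -/
open Finset

/-- Any optimal allocation of searches under a budget is balanced: all
search counts differ by at most 1. -/
theorem optimal_allocation_balanced (β : ℝ) (hβ0 : 0 < β) (hβ1 : β < 1)
    (n S : ℕ) (s : Fin n → ℕ) (hfeas : ∑ i, s i ≤ S)
    (hopt : ∀ t : Fin n → ℕ, ∑ i, t i ≤ S →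
      ∑ i, (1 - β ^ t i) ≤ ∑ i, (1 - β ^ s i)) :
    ∀ i j, s i ≤ s j + 1 := by
  classical
  intro i j
  by_contra h
  push_neg at h
  have hij : i ≠ j := by rintro rfl; omega
  set a := s i with ha
  set b := s j with hb
  have hab : b + 2 ≤ a := h
  set t : Fin n → ℕ := Function.update (Function.update s i (a - 1)) j (b + 1) with ht
  -- decompose sums over univ into j, i, rest
  have hmemj : j ∈ (Finset.univ : Finset (Fin n)) := Finset.mem_univ j
  have hmemi : i ∈ (Finset.univ : Finset (Fin n)).erase j :=
    Finset.mem_erase.mpr ⟨hij, Finset.mem_univ i⟩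
  have decomp : ∀ f : Fin n → ℝ,
      ∑ k, f k = f j + (f i + ∑ k ∈ (univ.erase j).erase i, f k) := by
    intro f
    rw [← Finset.add_sum_erase _ f hmemj, ← Finset.add_sum_erase _ f hmemi]
  have decompN : ∀ f : Fin n → ℕ,
      ∑ k, f k = f j + (f i + ∑ k ∈ (univ.erase j).erase i, f k) := by
    intro f
    rw [← Finset.add_sum_erase _ f hmemj, ← Finset.add_sum_erase _ f hmemi]
  have hti : t i = a - 1 := by
    simp [ht, Function.update, hij]
  have htj : t j = b + 1 := by simp [ht]
  have htk : ∀ k ∈ (univ.erase j).erase i, t k = s k := by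
    intro k hk
    rcases Finset.mem_erase.mp hk with ⟨hki, hk2⟩
    rcases Finset.mem_erase.mp hk2 with ⟨hkj, _⟩
    simp [ht, Function.update, hki, hkj]
  have hsum : ∑ k, t k = ∑ k, s k := by
    rw [decompN t, decompN s, hti, htj, Finset.sum_congr rfl htk]
    show b + 1 + (a - 1 + ((Finset.univ.erase j).erase i).sum s)
      = b + (a + ((Finset.univ.erase j).erase i).sum s)
    omega
  have hfeas' : ∑ k, t k ≤ S := by rw [hsum]; exact hfeas
  have hle := hopt t hfeas'
  rw [decomp (fun k => (1:ℝ) - β ^ t k), decomp (fun k => (1:ℝ) - β ^ s k)] at hle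
  simp only [hti, htj] at hle
  have hrest : ∑ k ∈ (univ.erase j).erase i, ((1:ℝ) - β ^ t k)
      = ∑ k ∈ (univ.erase j).erase i, ((1:ℝ) - β ^ s k) := by
    refine Finset.sum_congr rfl fun k hk => by rw [htk k hk]
  rw [hrest, ← ha, ← hb] at hle
  -- now hle : (1 - β^(b+1)) + ((1 - β^(a-1)) + R) ≤ (1 - β^b) + ((1 - β^a) + R)
  have key : β ^ (b + 1) + β ^ (a - 1) < β ^ b + β ^ a := by
    have h1 : β ^ (a - 1) * β = β ^ a := by
      rw [← pow_succ]; congr 1; omega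
    have h1' : β ^ b * β = β ^ (b + 1) := (pow_succ β b).symm
    have h2 : β ^ (a - 1) < β ^ b := by
      apply pow_lt_pow_right_of_lt_one₀ hβ0 hβ1
      omega
    nlinarith [pow_pos hβ0 b, pow_pos hβ0 (a-1)]
  linarith
end

section
/- Let V ⊂ ℝ be a finite set of points on the line with search costs c_i ∈ ℕ, priors p_i, false-negative probabilities β_i, and budget T. For every schedule there exists a schedule of weight at most that of the original which searches each point the same number of times and visits points monotonically from left to right (from the leftmost visited point to the rightmost); consequently, there exists an optimal schedule ψ* for the 1D problem such that ψ*(t_1) ≤ ψ*(t_2) whenever t_1 ≤ t_2. -/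
/-!
Splitting off the search costs, the weight of a schedule is `∑ b i * c i` plus the length of
its route. A route through the leftmost and the rightmost searched point is at least as long as
the distance between them, and the left-to-right sweep that searches every point in one block
has exactly that length. An optimal schedule is then found among the sweeps, indexed by count
vectors `b`; within budget `T` these satisfy `b i ≤ T` because `c i ≥ 1`, so there are finitely
many of them.
-/

open Finset

/-- Weight of a 1D schedule: a repeated point is a search step (cost `c`),
a move between distinct points costs the distance between them. -/
def weight1D {n : ℕ} (v : Fin n → ℝ) (c : Fin n → ℕ) : List (Fin n) → ℝ
  | [] => 0
  | [_] => 0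
  | a :: b :: l => (if a = b then (c a : ℝ) else |v a - v b|) + weight1D v c (b :: l)

/-- Number of search steps at point `i`. -/
def searchCount1D {n : ℕ} (i : Fin n) : List (Fin n) → ℕ
  | a :: b :: l => (if a = b ∧ b = i then 1 else 0) + searchCount1D i (b :: l)
  | _ => 0

section
variable {n : ℕ} {v : Fin n → ℝ} {c : Fin n → ℕ}

lemma weight1D_nonneg : ∀ l : List (Fin n), 0 ≤ weight1D v c l
  | [] | [_] => le_rfl
  | a :: b :: l => by
    rw [weight1D]
    exact add_nonneg (by split_ifs <;> positivity) (weight1D_nonneg (b :: l))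

lemma weight1D_zero_cons_cons (a b : Fin n) (l : List (Fin n)) :
    weight1D v 0 (a :: b :: l) = |v a - v b| + weight1D v 0 (b :: l) := by
  rw [weight1D]
  split_ifs with h <;> simp [h]

lemma weight1D_eq_sum_add_weight1D_zero : ∀ l : List (Fin n),
    weight1D v c l = ∑ j, (searchCount1D j l : ℝ) * c j + weight1D v 0 l
  | [] | [_] => by simp [weight1D, searchCount1D]
  | a :: b :: l => by
    rw [weight1D, weight1D_zero_cons_cons, weight1D_eq_sum_add_weight1D_zero (b :: l)]
    simp only [searchCount1D, Nat.cast_add, add_mul, sum_add_distrib]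
    split_ifs with hab
    · subst hab
      simp only [true_and, Nat.cast_ite, Nat.cast_one, CharP.cast_eq_zero, ite_mul, one_mul,
        zero_mul, sum_ite_eq, mem_univ, ↓reduceIte, sub_self, abs_zero, zero_add]
      ring
    · simp only [hab, false_and, ↓reduceIte, CharP.cast_eq_zero, zero_mul, sum_const_zero,
        zero_add]
      ring

lemma abs_sub_le_weight1D_zero : ∀ {l : List (Fin n)} {a b : Fin n},
    a ∈ l → b ∈ l → |v a - v b| ≤ weight1D v 0 l
  | [x], a, b, ha, hb => by simp_all [weight1D]
  | x :: y :: t, a, b, ha, hb => by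
    have htail {a b} := @abs_sub_le_weight1D_zero (y :: t) a b
    rw [weight1D_zero_cons_cons]
    have hhead : ∀ b ∈ x :: y :: t, |v x - v b| ≤ |v x - v y| + weight1D v 0 (y :: t) := by
      intro b hb
      rcases List.mem_cons.1 hb with rfl | hb
      · simpa using add_nonneg (abs_nonneg _) (weight1D_nonneg _)
      · exact (abs_sub_le _ _ _).trans (add_le_add_right (htail List.mem_cons_self hb) _)
    rcases List.mem_cons.1 ha with rfl | ha
    · exact hhead b hb
    rcases List.mem_cons.1 hb with hb | hb
    · rw [hb, abs_sub_comm]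
      exact hhead a (List.mem_cons_of_mem _ ha)
    · exact (htail ha hb).trans (le_add_of_nonneg_left (abs_nonneg _))

lemma weight1D_zero_of_isChain (hv : Monotone v) : ∀ {l : List (Fin n)} (hl : l ≠ []),
    l.IsChain (· ≤ ·) → weight1D v 0 l = v (l.getLast hl) - v (l.head hl)
  | [x], _, _ => by simp [weight1D]
  | x :: y :: t, _, hc => by
    rw [List.isChain_cons_cons] at hc
    rw [weight1D_zero_cons_cons, weight1D_zero_of_isChain hv (List.cons_ne_nil y t) hc.2,
      abs_sub_comm, abs_of_nonneg (sub_nonneg.2 (hv hc.1))]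
    simp

lemma weight1D_zero_le_of_isChain (hv : Monotone v) {l ψ : List (Fin n)}
    (hl : l.IsChain (· ≤ ·)) (hsub : l ⊆ ψ) : weight1D v 0 l ≤ weight1D v 0 ψ := by
  rcases eq_or_ne l [] with rfl | hne
  · exact weight1D_nonneg ψ
  rw [weight1D_zero_of_isChain hv hne hl]
  exact (le_abs_self _).trans
    (abs_sub_le_weight1D_zero (hsub (List.getLast_mem hne)) (hsub (List.head_mem hne)))

lemma weight1D_le_of_isChain (hv : Monotone v) {l ψ : List (Fin n)}
    (hl : l.IsChain (· ≤ ·)) (hsub : l ⊆ ψ)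
    (hcount : ∀ j, searchCount1D j l = searchCount1D j ψ) :
    weight1D v c l ≤ weight1D v c ψ := by
  rw [weight1D_eq_sum_add_weight1D_zero l, weight1D_eq_sum_add_weight1D_zero ψ]
  simp only [hcount]
  exact add_le_add_right (weight1D_zero_le_of_isChain hv hl hsub) _

lemma searchCount1D_le_weight1D (hc : ∀ i, 1 ≤ c i) (i : Fin n) (ψ : List (Fin n)) :
    (searchCount1D i ψ : ℝ) ≤ weight1D v c ψ :=
  calc (searchCount1D i ψ : ℝ)
      ≤ searchCount1D i ψ * c i := le_mul_of_one_le_right (by positivity) (by exact_mod_cast hc i)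
    _ ≤ ∑ j, (searchCount1D j ψ : ℝ) * c j :=
        single_le_sum (f := fun j => (searchCount1D j ψ : ℝ) * c j)
          (fun j _ => by positivity) (mem_univ i)
    _ ≤ weight1D v c ψ := by
        rw [weight1D_eq_sum_add_weight1D_zero ψ]
        exact le_add_of_nonneg_right (weight1D_nonneg ψ)

lemma mem_of_searchCount1D_ne_zero {i : Fin n} :
    ∀ {l : List (Fin n)}, searchCount1D i l ≠ 0 → i ∈ l
  | a :: b :: l, h => by
    rw [searchCount1D] at h
    split_ifs at h with hab
    · simp [hab.2]
    · exact List.mem_cons_of_mem a (mem_of_searchCount1D_ne_zero (by simpa using h))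

lemma searchCount1D_cons_cons_self (i j : Fin n) (l : List (Fin n)) :
    searchCount1D j (i :: i :: l) = (if i = j then 1 else 0) + searchCount1D j (i :: l) := by
  simp [searchCount1D]

lemma searchCount1D_replicate_append (i j : Fin n) (l : List (Fin n)) :
    ∀ k, searchCount1D j (List.replicate k i ++ i :: l) =
      (if i = j then k else 0) + searchCount1D j (i :: l)
  | 0 => by simp
  | k + 1 => by
    have hcons : List.replicate k i ++ i :: l = i :: (List.replicate k i ++ l) := by
      rw [← List.singleton_append, ← List.append_assoc, ← List.replicate_succ',
        List.replicate_succ, List.cons_append]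
    rw [List.replicate_succ, List.cons_append, hcons, searchCount1D_cons_cons_self, ← hcons,
      searchCount1D_replicate_append i j l k]
    split_ifs <;> omega

lemma searchCount1D_cons_of_head?_ne {i : Fin n} (j : Fin n) {l : List (Fin n)}
    (h : l.head? ≠ some i) : searchCount1D j (i :: l) = searchCount1D j l := by
  rcases l with _ | ⟨a, l⟩
  · rfl
  · simp only [List.head?_cons, ne_eq, Option.some.injEq] at h
    simp [searchCount1D, Ne.symm h]

lemma searchCount1D_flatMap_replicate (b : Fin n → ℕ) (j : Fin n) :
    ∀ {is : List (Fin n)}, is.Pairwise (· < ·) →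
      searchCount1D j (is.flatMap fun i => List.replicate (b i + 1) i) =
        if j ∈ is then b j else 0
  | [], _ => rfl
  | i :: is, h => by
    rw [List.pairwise_cons] at h
    have hhead : (is.flatMap fun i => List.replicate (b i + 1) i).head? ≠ some i := by
      rcases is with _ | ⟨a, is⟩
      · simp
      · simp [List.replicate_succ, (h.1 a List.mem_cons_self).ne']
    rw [List.flatMap_cons, List.replicate_succ', List.append_assoc, List.singleton_append,
      searchCount1D_replicate_append, searchCount1D_cons_of_head?_ne j hhead,
      searchCount1D_flatMap_replicate b j h.2]
    have hi : i ∉ is := fun hi => lt_irrefl i (h.1 i hi)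
    by_cases hij : i = j
    · subst hij
      simp [hi]
    · simp [hij, Ne.symm hij]

-- A block of `b i + 1` copies of `i` contains `b i` search steps.
def sweepSchedule (b : Fin n → ℕ) : List (Fin n) :=
  ((List.finRange n).filter (b · ≠ 0)).flatMap fun i => List.replicate (b i + 1) i

lemma mem_sweepSchedule {b : Fin n → ℕ} {i : Fin n} : i ∈ sweepSchedule b ↔ b i ≠ 0 := by
  simp [sweepSchedule]

lemma searchCount1D_sweepSchedule (b : Fin n → ℕ) (j : Fin n) :
    searchCount1D j (sweepSchedule b) = b j := by
  rw [sweepSchedule, searchCount1D_flatMap_replicate b j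
    ((List.pairwise_lt_finRange n).sublist List.filter_sublist)]
  by_cases hj : b j = 0 <;> simp [hj]

lemma isChain_sweepSchedule (b : Fin n → ℕ) : (sweepSchedule b).IsChain (· ≤ ·) := by
  refine List.Pairwise.isChain (List.pairwise_flatMap.2 ⟨fun i _ => by simp, ?_⟩)
  refine ((List.pairwise_lt_finRange n).sublist List.filter_sublist).imp ?_
  intro a a' h x hx y hy
  rw [(List.mem_replicate.1 hx).2, (List.mem_replicate.1 hy).2]
  exact h.le

lemma sweepSchedule_searchCount1D_subset (ψ : List (Fin n)) :
    sweepSchedule (searchCount1D · ψ) ⊆ ψ :=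
  fun _ hi => mem_of_searchCount1D_ne_zero (mem_sweepSchedule.1 hi)

theorem weight1D_sweepSchedule_le (hv : Monotone v) (ψ : List (Fin n)) :
    weight1D v c (sweepSchedule (searchCount1D · ψ)) ≤ weight1D v c ψ :=
  weight1D_le_of_isChain hv (isChain_sweepSchedule _) (sweepSchedule_searchCount1D_subset ψ)
    (searchCount1D_sweepSchedule _)

theorem exists_sweepSchedule_forall_le (hv : Monotone v) (hc : ∀ i, 1 ≤ c i) {T : ℝ}
    (hT : 0 ≤ T) (f : (Fin n → ℕ) → ℝ) :
    ∃ bs, weight1D v c (sweepSchedule bs) ≤ T ∧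
      ∀ ψ, weight1D v c ψ ≤ T → f (searchCount1D · ψ) ≤ f bs := by
  classical
  let S := (Fintype.piFinset fun _ => range (⌊T⌋₊ + 1)).filter
    fun b => weight1D v c (sweepSchedule b) ≤ T
  have h0 : 0 ∈ S := by simp [S, sweepSchedule, weight1D, hT]
  obtain ⟨bs, hbs, hmax⟩ := S.exists_max_image f ⟨0, h0⟩
  refine ⟨bs, (mem_filter.1 hbs).2, fun ψ hψ => hmax _ (mem_filter.2 ⟨?_, ?_⟩)⟩
  · simp only [Fintype.mem_piFinset, mem_range, Nat.lt_succ_iff]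
    exact fun i => Nat.le_floor ((searchCount1D_le_weight1D hc i ψ).trans hψ)
  · exact (weight1D_sweepSchedule_le hv ψ).trans hψ

end

theorem oneD_monotone_optimal_general (n : ℕ) (v : Fin n → ℝ) (hv : StrictMono v)
    (c : Fin n → ℕ) (hc : ∀ i, 1 ≤ c i)
    (p β : Fin n → ℝ) (T : ℝ) (hT : 0 ≤ T) :
    (∀ ψ : List (Fin n), ∃ ψ' : List (Fin n),
        weight1D v c ψ' ≤ weight1D v c ψ ∧
        (∀ i, searchCount1D i ψ' = searchCount1D i ψ) ∧
        ψ'.Chain' (· ≤ ·)) ∧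
    (∃ ψs : List (Fin n), weight1D v c ψs ≤ T ∧ ψs.Chain' (· ≤ ·) ∧
        ∀ ψ : List (Fin n), weight1D v c ψ ≤ T →
          ∑ i, (1 - β i ^ searchCount1D i ψ) * p i
            ≤ ∑ i, (1 - β i ^ searchCount1D i ψs) * p i) := by
  refine ⟨fun ψ => ⟨_, weight1D_sweepSchedule_le hv.monotone ψ,
    searchCount1D_sweepSchedule _, isChain_sweepSchedule _⟩, ?_⟩
  obtain ⟨bs, hbsT, hbs⟩ := exists_sweepSchedule_forall_le hv.monotone hc hT
    fun b => ∑ i, (1 - β i ^ b i) * p i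
  refine ⟨sweepSchedule bs, hbsT, isChain_sweepSchedule bs, fun ψ hψ => ?_⟩
  simpa only [searchCount1D_sweepSchedule] using hbs ψ hψ

/-- In 1D, every schedule can be replaced by a left-to-right (monotone)
schedule of at most the same weight searching each point the same number of
times; consequently there is an optimal monotone schedule. -/
theorem oneD_monotone_optimal (n : ℕ) (v : Fin n → ℝ) (hv : StrictMono v)
    (c : Fin n → ℕ) (hc : ∀ i, 1 ≤ c i)
    (p β : Fin n → ℝ) (hp : ∀ i, 0 ≤ p i) (hsum : ∑ i, p i = 1)
    (hβ : ∀ i, 0 ≤ β i ∧ β i < 1) (T : ℝ) (hT : 0 ≤ T) :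
    (∀ ψ : List (Fin n), ∃ ψ' : List (Fin n),
        weight1D v c ψ' ≤ weight1D v c ψ ∧
        (∀ i, searchCount1D i ψ' = searchCount1D i ψ) ∧
        ψ'.Chain' (· ≤ ·)) ∧
    (∃ ψs : List (Fin n), weight1D v c ψs ≤ T ∧ ψs.Chain' (· ≤ ·) ∧
        ∀ ψ : List (Fin n), weight1D v c ψ ≤ T →
          ∑ i, (1 - β i ^ searchCount1D i ψ) * p i
            ≤ ∑ i, (1 - β i ^ searchCount1D i ψs) * p i) :=
  oneD_monotone_optimal_general n v hv c hc p β T hT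
end

section
/- Given β ∈ (0,1), uniform prior 1/n, uniform search cost c ∈ ℕ with c ≥ 1, travel cost L ≤ T, and k visited points, the maximum detection probability achievable is (1/n)·(k - (n - r)·β^q - r·β^{q+1}), where S = ⌊(T - L)/c⌋ is the total number of searches, q = ⌊S/k⌋ and r = S mod k. -/
open Finset

/-- Chord inequality for the convex sequence `β ^ s`. -/
lemma chord_pow (β : ℝ) (hβ0 : 0 < β) (hβ1 : β < 1) (q s : ℕ) :
    β ^ q + ((s : ℝ) - q) * (β ^ (q + 1) - β ^ q) ≤ β ^ s := by
  rcases le_or_gt q s with h | h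
  · obtain ⟨m, rfl⟩ := Nat.exists_eq_add_of_le h
    have hb : 1 + (m : ℝ) * (β - 1) ≤ β ^ m := by
      have := one_add_mul_le_pow (a := β - 1) (by linarith) m
      simpa using this
    have hq : (0 : ℝ) < β ^ q := pow_pos hβ0 q
    have h1 : β ^ (q + m) = β ^ q * β ^ m := pow_add β q m
    have h2 : β ^ (q + 1) = β ^ q * β := pow_succ β q
    rw [h1, h2]
    push_cast
    nlinarith [mul_le_mul_of_nonneg_left hb hq.le]
  · obtain ⟨m, rfl⟩ := Nat.exists_eq_add_of_lt h
    set M := m + 1 with hM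
    have hgeom : (∑ j ∈ Finset.range M, β ^ j) * (β - 1) = β ^ M - 1 := geom_sum_mul β M
    have hsum : (M : ℝ) * β ^ M ≤ ∑ j ∈ Finset.range M, β ^ j := by
      calc (M : ℝ) * β ^ M = ∑ _j ∈ Finset.range M, β ^ M := by
            rw [Finset.sum_const]; simp [mul_comm]
        _ ≤ ∑ j ∈ Finset.range M, β ^ j :=
            Finset.sum_le_sum fun j hj =>
              pow_le_pow_of_le_one hβ0.le hβ1.le (Finset.mem_range.mp hj).le
    have hkey : (1 - β) * ((M : ℝ) * β ^ M) ≤ 1 - β ^ M := by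
      have h1 : (1 - β ^ M) = (∑ j ∈ Finset.range M, β ^ j) * (1 - β) := by
        linarith [hgeom]
      rw [h1]
      have : (0 : ℝ) ≤ 1 - β := by linarith
      nlinarith [mul_le_mul_of_nonneg_left hsum this]
    have hqe : s + m + 1 = s + M := by omega
    rw [hqe]
    push_cast at hkey
    have h1 : β ^ (s + M) = β ^ s * β ^ M := pow_add β s M
    have h2 : β ^ (s + M + 1) = β ^ s * β ^ M * β := by rw [pow_succ, h1]
    rw [h1, h2]
    push_cast
    nlinarith [mul_le_mul_of_nonneg_left hkey (pow_pos hβ0 s).le]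

/-- Sum of an `if i < r` over `range k`. -/
lemma sum_ite_lt_range {M : Type*} [AddCommMonoid M] (k r : ℕ) (hrk : r ≤ k) (a b : M) :
    ∑ i ∈ Finset.range k, (if i < r then a else b) = r • a + (k - r) • b := by
  rw [Finset.range_eq_Ico, ← Finset.sum_Ico_consecutive _ (Nat.zero_le r) hrk,
    Finset.sum_congr rfl (fun i hi => if_pos (Finset.mem_Ico.mp hi).2),
    Finset.sum_congr rfl (fun i hi => if_neg (not_lt.mpr (Finset.mem_Ico.mp hi).1)),
    Finset.sum_const, Finset.sum_const, Nat.card_Ico, Nat.card_Ico]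
  simp

/-- Uniform ImpSea: with travel cost `L` out of budget `T`, uniform search
cost `c` and `k` visited points, the optimal detection probability is
`(1/n)·(k - (k - r)·β^q - r·β^(q+1))` where `S = ⌊(T-L)/c⌋`, `q = ⌊S/k⌋`,
`r = S mod k`. -/
theorem uniform_impsea_value (β : ℝ) (hβ0 : 0 < β) (hβ1 : β < 1)
    (n k c : ℕ) (hn : 1 ≤ n) (hk : 1 ≤ k) (hc : 1 ≤ c)
    (T L : ℝ) (hL0 : 0 ≤ L) (hLT : L ≤ T)
    (S q r : ℕ) (hS : S = ⌊(T - L) / (c : ℝ)⌋₊) (hq : q = S / k) (hr : r = S % k) :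
    IsGreatest
      {x : ℝ | ∃ s : Fin k → ℕ, (∑ i, s i) ≤ S ∧
        x = (1 / (n : ℝ)) * ∑ i, (1 - β ^ s i)}
      ((1 / (n : ℝ)) * ((k : ℝ) - ((k : ℝ) - (r : ℝ)) * β ^ q - (r : ℝ) * β ^ (q + 1))) := by
  have hrk : r < k := hr ▸ Nat.mod_lt S hk
  have hSkqr : k * q + r = S := by rw [hq, hr]; exact Nat.div_add_mod S k
  constructor
  · -- membership : balanced allocation
    refine ⟨fun i => if (i : ℕ) < r then q + 1 else q, ?_, ?_⟩
    · rw [Fin.sum_univ_eq_sum_range (fun i => if i < r then q + 1 else q) k,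
        sum_ite_lt_range k r hrk.le]
      simp only [smul_eq_mul]
      obtain ⟨m, rfl⟩ : ∃ m, k = r + m := ⟨k - r, by omega⟩
      have : r + m - r = m := by omega
      rw [this]
      calc r * (q + 1) + m * q = (r + m) * q + r := by ring
        _ ≤ S := hSkqr.le
    · congr 1
      have hpow : ∀ i : Fin k, (1 : ℝ) - β ^ (if (i : ℕ) < r then q + 1 else q)
          = (if (i : ℕ) < r then (1 : ℝ) - β ^ (q + 1) else 1 - β ^ q) := by
        intro i; split <;> rfl
      rw [Finset.sum_congr rfl (fun i _ => hpow i),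
        Fin.sum_univ_eq_sum_range (fun i => if i < r then (1 : ℝ) - β ^ (q + 1) else 1 - β ^ q) k,
        sum_ite_lt_range k r hrk.le]
      simp only [nsmul_eq_mul]
      rw [Nat.cast_sub hrk.le]
      ring
  · -- upper bound
    rintro x ⟨s, hsle, rfl⟩
    have hn0 : (0 : ℝ) ≤ 1 / (n : ℝ) := by positivity
    refine mul_le_mul_of_nonneg_left ?_ hn0
    have hsplit : ∑ i : Fin k, ((1 : ℝ) - β ^ s i)
        = (k : ℝ) - ∑ i : Fin k, β ^ s i := by
      rw [Finset.sum_sub_distrib, Finset.sum_const, Finset.card_univ, Fintype.card_fin,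
        nsmul_eq_mul, mul_one]
    rw [hsplit]
    have hchord : ∀ i : Fin k, β ^ q + ((s i : ℝ) - q) * (β ^ (q + 1) - β ^ q) ≤ β ^ s i :=
      fun i => chord_pow β hβ0 hβ1 q (s i)
    have hsum := Finset.sum_le_sum (fun i (_ : i ∈ Finset.univ) => hchord i)
    have hlhs : ∑ i : Fin k, (β ^ q + ((s i : ℝ) - q) * (β ^ (q + 1) - β ^ q))
        = (k : ℝ) * β ^ q + ((∑ i, (s i : ℝ)) - k * q) * (β ^ (q + 1) - β ^ q) := by
      rw [Finset.sum_add_distrib, Finset.sum_const, Finset.card_univ, Fintype.card_fin,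
        nsmul_eq_mul, ← Finset.sum_mul, Finset.sum_sub_distrib, Finset.sum_const,
        Finset.card_univ, Fintype.card_fin, nsmul_eq_mul]
    rw [hlhs] at hsum
    have hcast : (∑ i, (s i : ℝ)) ≤ (k : ℝ) * q + r := by
      have h1 : ((∑ i, s i : ℕ) : ℝ) ≤ (S : ℝ) := Nat.cast_le.mpr hsle
      have h2 : ((S : ℕ) : ℝ) = (k : ℝ) * q + r := by
        rw [← hSkqr]; push_cast; ring
      rw [Nat.cast_sum] at h1
      linarith [h1, h2.le, h2.ge]
    have hqq : β ^ (q + 1) ≤ β ^ q := by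
      rw [pow_succ]
      nlinarith [pow_pos hβ0 q]
    nlinarith [mul_nonneg (sub_nonneg.mpr hcast) (sub_nonneg.mpr hqq), hsum]
end

section
/- Given β ∈ (0,1), k ∈ ℕ with k ≥ 1, and S ∈ ℕ, write S = kq + r with 0 ≤ r < k. Then max { ∑_{i=1}^k (1 - β^{s_i}) : s_i ∈ ℕ, ∑ s_i ≤ S } = (k - r)(1 - β^q) + r(1 - β^{q+1}). -/
open Finset

lemma sum_ite_lt_aux {M : Type*} [AddCommMonoid M] (k r : ℕ) (hr : r ≤ k) (a b : M) :
    ∑ i : Fin k, (if (i : ℕ) < r then a else b) = r • a + (k - r) • b := by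
  rw [Fin.sum_univ_eq_sum_range (fun i => if i < r then a else b) k,
    Finset.range_eq_Ico, ← Finset.sum_Ico_consecutive _ (Nat.zero_le r) hr]
  rw [Finset.sum_congr rfl (fun x hx => by
      simp only [Finset.mem_Ico] at hx
      rw [if_pos hx.2]),
    Finset.sum_congr (rfl : Finset.Ico r k = Finset.Ico r k) (fun x hx => by
      simp only [Finset.mem_Ico] at hx
      rw [if_neg (by omega)])]
  simp [Nat.card_Ico]

/-- Convexity-type bound: `β^s ≥ β^q - (s - q)(β^q - β^{q+1})`. -/
lemma pow_secant_bound (β : ℝ) (hβ0 : 0 < β) (hβ1 : β < 1) (q s : ℕ) :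
    β ^ q - ((s : ℝ) - (q : ℝ)) * (β ^ q - β ^ (q + 1)) ≤ β ^ s := by
  have hc : β ^ q - β ^ (q + 1) = β ^ q * (1 - β) := by ring
  rcases le_or_gt q s with h | h
  · -- s ≥ q : β^q - β^s = β^q (1 - β^{s-q}) ≤ β^q (s-q)(1-β)
    set m := s - q with hm
    have hs : s = q + m := by omega
    have bern : 1 - (m : ℝ) * (1 - β) ≤ β ^ m := by
      have := one_add_mul_le_pow (a := β - 1) (by linarith) m
      have h1 : (1 : ℝ) + (β - 1) = β := by ring
      rw [h1] at this
      linarith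
    have hβq : (0 : ℝ) ≤ β ^ q := le_of_lt (pow_pos hβ0 q)
    have : β ^ q * (1 - (m : ℝ) * (1 - β)) ≤ β ^ q * β ^ m :=
      mul_le_mul_of_nonneg_left bern hβq
    rw [← pow_add] at this
    rw [← hs] at this
    have hms : (s : ℝ) - (q : ℝ) = (m : ℝ) := by
      rw [hs]; push_cast; ring
    rw [hms, hc]
    nlinarith [this]
  · -- s < q : β^q (1 + (q-s)(1-β)) ≤ β^q / β^{q-s} ≤ β^s
    set m := q - s with hm
    have hq : q = s + m := by omega
    have hβm : (0 : ℝ) < β ^ m := pow_pos hβ0 m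
    have hβs : (0 : ℝ) < β ^ s := pow_pos hβ0 s
    have bern : 1 + (m : ℝ) * (1 / β - 1) ≤ (1 / β) ^ m := by
      have := one_add_mul_le_pow (a := 1 / β - 1)
        (by nlinarith [one_div_pos.2 hβ0] : (-2 : ℝ) ≤ 1 / β - 1) m
      have h1 : (1 : ℝ) + (1 / β - 1) = 1 / β := by ring
      rwa [h1] at this
    have hstep : (1 : ℝ) + (m : ℝ) * (1 - β) ≤ (1 / β) ^ m := by
      have : (1 : ℝ) - β ≤ 1 / β - 1 := by
        have hb : ((1 - β) + 1) * β ≤ 1 := by nlinarith [sq_nonneg (1 - β)]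
        have := (le_div_iff₀ hβ0).2 hb
        linarith
      have hmn : (0 : ℝ) ≤ (m : ℝ) := Nat.cast_nonneg m
      nlinarith
    -- multiply by β^m :
    have hmul : β ^ m * (1 + (m : ℝ) * (1 - β)) ≤ 1 := by
      have := mul_le_mul_of_nonneg_left hstep (le_of_lt hβm)
      calc β ^ m * (1 + (m : ℝ) * (1 - β)) ≤ β ^ m * (1 / β) ^ m := this
        _ = 1 := by
          rw [← mul_pow]
          rw [mul_one_div, div_self (ne_of_gt hβ0), one_pow]
    have key : β ^ q * (1 + (m : ℝ) * (1 - β)) ≤ β ^ s := by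
      have : β ^ s * (β ^ m * (1 + (m : ℝ) * (1 - β))) ≤ β ^ s * 1 :=
        mul_le_mul_of_nonneg_left hmul (le_of_lt hβs)
      calc β ^ q * (1 + (m : ℝ) * (1 - β))
          = β ^ s * (β ^ m * (1 + (m : ℝ) * (1 - β))) := by
            rw [hq, pow_add]; ring
        _ ≤ β ^ s * 1 := this
        _ = β ^ s := mul_one _
    have hms : (s : ℝ) - (q : ℝ) = -(m : ℝ) := by
      rw [hq]; push_cast; ring
    rw [hms, hc]
    nlinarith [key]

/-- Balanced allocation maximizes the (unnormalized) detection probability: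
with `S = k·q + r`, `0 ≤ r < k`, the maximum of `∑ (1 - β^{s_i})` over
allocations with `∑ s_i ≤ S` equals `(k - r)(1 - β^q) + r(1 - β^{q+1})`. -/
theorem balanced_allocation_max (β : ℝ) (hβ0 : 0 < β) (hβ1 : β < 1)
    (k S q r : ℕ) (hk : 1 ≤ k) (hS : S = k * q + r) (hr : r < k) :
    IsGreatest
      {x : ℝ | ∃ s : Fin k → ℕ, (∑ i, s i) ≤ S ∧ x = ∑ i, (1 - β ^ s i)}
      (((k : ℝ) - (r : ℝ)) * (1 - β ^ q) + (r : ℝ) * (1 - β ^ (q + 1))) := by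
  constructor
  · -- membership: the balanced allocation
    refine ⟨fun i => if (i : ℕ) < r then q + 1 else q, ?_, ?_⟩
    · obtain ⟨d, hd⟩ := Nat.exists_eq_add_of_le hr.le
      have h2 : k - r = d := by omega
      rw [sum_ite_lt_aux k r hr.le (q + 1) q, smul_eq_mul, smul_eq_mul, h2, hS, hd]
      exact Nat.le_of_eq (by ring)
    · have h1 : ∀ i : Fin k, (1 : ℝ) - β ^ (if (i : ℕ) < r then q + 1 else q)
          = if (i : ℕ) < r then (1 - β ^ (q + 1)) else (1 - β ^ q) := by
        intro i; split <;> rfl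
      rw [Finset.sum_congr rfl (fun i _ => h1 i),
        sum_ite_lt_aux k r hr.le (1 - β ^ (q + 1)) (1 - β ^ q)]
      have hkr : ((k - r : ℕ) : ℝ) = (k : ℝ) - (r : ℝ) := by
        push_cast [Nat.cast_sub hr.le]; ring
      rw [nsmul_eq_mul, nsmul_eq_mul, hkr]
      ring
  · -- upper bound
    rintro x ⟨s, hsum, rfl⟩
    have hbound : ∀ i : Fin k,
        (1 : ℝ) - β ^ s i ≤ 1 - β ^ q + ((s i : ℝ) - (q : ℝ)) * (β ^ q - β ^ (q + 1)) := by
      intro i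
      have := pow_secant_bound β hβ0 hβ1 q (s i)
      linarith
    have hsum' : ∑ i, ((1 : ℝ) - β ^ s i)
        ≤ ∑ i : Fin k, (1 - β ^ q + ((s i : ℝ) - (q : ℝ)) * (β ^ q - β ^ (q + 1))) :=
      Finset.sum_le_sum (fun i _ => hbound i)
    have hc : (0 : ℝ) ≤ β ^ q - β ^ (q + 1) := by
      have : β ^ (q + 1) ≤ β ^ q :=
        pow_le_pow_of_le_one (le_of_lt hβ0) (le_of_lt hβ1) (by omega)
      linarith
    have hS' : (∑ i, (s i : ℝ)) ≤ (k : ℝ) * (q : ℝ) + (r : ℝ) := by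
      have : ((∑ i, s i : ℕ) : ℝ) ≤ (S : ℝ) := Nat.cast_le.2 hsum
      rw [hS] at this
      push_cast at this
      exact this
    have hexp : ∑ i : Fin k, (1 - β ^ q + ((s i : ℝ) - (q : ℝ)) * (β ^ q - β ^ (q + 1)))
        = (k : ℝ) * (1 - β ^ q) + ((∑ i, (s i : ℝ)) - (k : ℝ) * (q : ℝ)) * (β ^ q - β ^ (q + 1)) := by
      rw [Finset.sum_add_distrib, Finset.sum_const, Finset.card_univ, Fintype.card_fin,
        ← Finset.sum_mul, Finset.sum_sub_distrib, Finset.sum_const, Finset.card_univ,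
        Fintype.card_fin]
      push_cast
      ring
    rw [hexp] at hsum'
    have hfinal : ((∑ i, (s i : ℝ)) - (k : ℝ) * (q : ℝ)) * (β ^ q - β ^ (q + 1))
        ≤ (r : ℝ) * (β ^ q - β ^ (q + 1)) := by
      apply mul_le_mul_of_nonneg_right _ hc
      linarith
    calc ∑ i, ((1 : ℝ) - β ^ s i)
        ≤ (k : ℝ) * (1 - β ^ q) + ((∑ i, (s i : ℝ)) - (k : ℝ) * (q : ℝ)) * (β ^ q - β ^ (q + 1)) := hsum'
      _ ≤ (k : ℝ) * (1 - β ^ q) + (r : ℝ) * (β ^ q - β ^ (q + 1)) := by linarith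
      _ = ((k : ℝ) - (r : ℝ)) * (1 - β ^ q) + (r : ℝ) * (1 - β ^ (q + 1)) := by ring
end

section
/- Consider points v_i = i/(2n) on the real line for i = 1, …, n. Any left-to-right schedule visiting a subset of these points has total travel cost at most 1/2; hence with budget T = B + 1/2 and integer search costs c_i, the set of points searchable (each exactly once) by some feasible left-to-right schedule is exactly the family of subsets I with ∑_{i ∈ I} c_i ≤ B. -/
open Finset

/-- For points `v_i = i/(2n)` (`i = 1,…,n`), any left-to-right schedule has
travel cost at most `1/2`; with budget `T = B + 1/2` and integer search
costs, a subset `I` is searchable by a feasible left-to-right schedule iff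
`∑_{i ∈ I} c_i ≤ B`. -/
theorem knapsack_reduction (n B : ℕ) (hn : 0 < n)
    (c : Fin n → ℕ) (hc : ∀ i, 0 < c i) (I : Finset (Fin n)) :
    (∀ i ∈ I, ∀ j ∈ I,
        |((i : ℕ) + 1 : ℝ) / (2 * n) - ((j : ℕ) + 1 : ℝ) / (2 * n)| ≤ 1 / 2) ∧
    ((∀ i ∈ I, ∀ j ∈ I,
        ((j : ℕ) + 1 : ℝ) / (2 * n) - ((i : ℕ) + 1 : ℝ) / (2 * n)
          + ∑ i ∈ I, (c i : ℝ) ≤ (B : ℝ) + 1 / 2)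
      ↔ ∑ i ∈ I, c i ≤ B) := by
  have hn' : (0 : ℝ) < 2 * n := by positivity
  have hbound : ∀ i : Fin n, (0 : ℝ) < ((i : ℕ) + 1 : ℝ) / (2 * n) ∧
      ((i : ℕ) + 1 : ℝ) / (2 * n) ≤ 1 / 2 := by
    intro i
    constructor
    · positivity
    · rw [div_le_iff₀ hn']
      have : ((i : ℕ) : ℝ) + 1 ≤ (n : ℝ) := by
        have := i.isLt
        exact_mod_cast this
      linarith
  constructor
  · intro i _ j _
    rcases hbound i with ⟨hi1, hi2⟩
    rcases hbound j with ⟨hj1, hj2⟩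
    rw [abs_le]
    constructor <;> linarith
  · constructor
    · intro h
      rcases I.eq_empty_or_nonempty with rfl | ⟨i, hi⟩
      · simp
      · have := h i hi i hi
        simp only [sub_self, zero_add] at this
        have hsum : ((∑ i ∈ I, c i : ℕ) : ℝ) ≤ (B : ℝ) + 1 / 2 := by
          push_cast
          linarith
        by_contra hlt
        push_neg at hlt
        have : ((B : ℕ) + 1 : ℝ) ≤ ((∑ i ∈ I, c i : ℕ) : ℝ) := by
          exact_mod_cast hlt
        linarith
    · intro h i _ j _
      rcases hbound i with ⟨hi1, hi2⟩
      rcases hbound j with ⟨hj1, hj2⟩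
      have hs : (∑ i ∈ I, (c i : ℝ)) ≤ (B : ℝ) := by
        have : ((∑ i ∈ I, c i : ℕ) : ℝ) ≤ (B : ℝ) := by exact_mod_cast h
        push_cast at this
        linarith
      linarith
end
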